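/- (Strong causality for unsharp localization: orthogonality of sharply localized states at spacelike separation.) Let H be a complex Hilbert space and let E assign to each time t ∈ ℝ and each bounded set Δ ⊆ ℝ³ an effect E(t,Δ) (a bounded selfadjoint operator with 0 ≤ E(t,Δ) ≤ I) such that: (weak localizability) if Δ₁ ∩ Δ₂ = ∅ then every φ ∈ H with E(t,Δ₁)φ = φ satisfies E(t,Δ₂)φ = 0; and (strong causality) for all t, t' ∈ ℝ and bounded Δ, every φ with E(t,Δ)φ = φ satisfies E(t', Δ_{|t'−t|})φ = φ, where Δ_s := {x ∈ ℝ³ : dist(x,Δ) ≤ s}. Then for any two spacelike separated sets, i.e., whenever inf{‖x−y‖ : x ∈ Δ₁, y ∈ Δ₂} > |t₁ − t₂|, any vectors φ, ψ ∈ H with E(t₁,Δ₁)φ = φ and E(t₂,Δ₂)ψ = ψ are orthogonal: ⟪φ, ψ⟫ = 0. (Equivalently, P⁽¹⁾_{Δ₁} P⁽¹⁾_{Δ₂} = 0 for the spectral projections at eigenvalue 1.) -/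

import Mathlib

/-!
By strong causality, a state `φ` sharply localized in `Δ₁` at time `t₁` is sharply localized at
time `t₂` in the inflated set `Δ₁` grown by `|t₂ - t₁|`, which spacelike separation keeps
disjoint from `Δ₂`. Weak localizability then makes `φ` an eigenvector of the effect
`E(t₂,Δ₂)` for the eigenvalue `0`, while `ψ` is one for the eigenvalue `1`; eigenvectors of a
selfadjoint operator for distinct eigenvalues are orthogonal.
-/

open scoped InnerProductSpace
open Bornology Metric

theorem Bornology.IsBounded.setOf_infDist_le {X : Type*} [PseudoMetricSpace X] {s : Set X}
    (hs : IsBounded s) (hne : s.Nonempty) (r : ℝ) : IsBounded {x | infDist x s ≤ r} :=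
  (hs.thickening (δ := r + 1)).subset fun _ hx ↦
    (mem_thickening_iff_infDist_lt hne).2 (hx.out.trans_lt (lt_add_one r))

theorem Metric.setOf_infDist_le_inter_eq_empty {X : Type*} [PseudoMetricSpace X]
    {s t : Set X} {r d : ℝ} (hne : s.Nonempty) (hrd : r < d)
    (hst : ∀ x ∈ s, ∀ y ∈ t, d ≤ dist x y) : {x | infDist x s ≤ r} ∩ t = ∅ := by
  refine Set.eq_empty_iff_forall_notMem.2 fun y ⟨hy, hyt⟩ ↦ ?_
  have hdy : d ≤ infDist y s := (le_infDist hne).2 fun x hx ↦ dist_comm x y ▸ hst x hx y hyt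
  exact (hy.out.trans_lt hrd).not_ge hdy

theorem LinearMap.IsSymmetric.inner_eq_zero_of_apply_eq_zero_of_apply_eq_self
    {𝕜 E : Type*} [RCLike 𝕜] [NormedAddCommGroup E] [InnerProductSpace 𝕜 E] {T : E →ₗ[𝕜] E}
    (hT : T.IsSymmetric) {φ ψ : E} (hφ : T φ = 0) (hψ : T ψ = ψ) : ⟪φ, ψ⟫_𝕜 = 0 :=
  hT.orthogonalFamily_eigenspaces.pairwise one_ne_zero
    (Module.End.mem_eigenspace_iff.2 (by rwa [one_smul])) φ
    (Module.End.mem_eigenspace_iff.2 (by rwa [zero_smul]))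

theorem strong_causality_orthogonality_unsharp_general
    {H : Type*} [NormedAddCommGroup H] [InnerProductSpace ℂ H]
    (E : ℝ → Set (EuclideanSpace ℝ (Fin 3)) → (H →L[ℂ] H))
    -- each E(t,Δ) is an effect
    (heff : ∀ (t : ℝ) (Δ : Set (EuclideanSpace ℝ (Fin 3))), IsBounded Δ →
      0 ≤ E t Δ ∧ E t Δ ≤ 1)
    -- weak localizability
    (hloc : ∀ (t : ℝ) (Δ₁ Δ₂ : Set (EuclideanSpace ℝ (Fin 3))),
      IsBounded Δ₁ → IsBounded Δ₂ → Δ₁ ∩ Δ₂ = ∅ →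
      ∀ φ : H, E t Δ₁ φ = φ → E t Δ₂ φ = 0)
    -- strong causality
    (hsc : ∀ (t t' : ℝ) (Δ : Set (EuclideanSpace ℝ (Fin 3))), IsBounded Δ →
      ∀ φ : H, E t Δ φ = φ → E t' {x | Metric.infDist x Δ ≤ |t' - t|} φ = φ) :
    ∀ (t₁ t₂ : ℝ) (Δ₁ Δ₂ : Set (EuclideanSpace ℝ (Fin 3))),
      IsBounded Δ₁ → IsBounded Δ₂ →
      (∃ d : ℝ, |t₁ - t₂| < d ∧ ∀ x ∈ Δ₁, ∀ y ∈ Δ₂, d ≤ dist x y) →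
      ∀ φ ψ : H, E t₁ Δ₁ φ = φ → E t₂ Δ₂ ψ = ψ → ⟪φ, ψ⟫_ℂ = 0 := by
  rintro t₁ t₂ Δ₁ Δ₂ hb₁ hb₂ ⟨d, hd, hsep⟩ φ ψ hφ hψ
  rcases Δ₁.eq_empty_or_nonempty with rfl | hne
  · -- `infDist x ∅ = 0`, so inflating `∅` gives all of space; instead `φ = 0` outright.
    have hφ0 : φ = 0 := hφ.symm.trans (hloc t₁ ∅ ∅ hb₁ hb₁ (Set.inter_self ∅) φ hφ)
    rw [hφ0, inner_zero_left]
  · have hdisj : {x | infDist x Δ₁ ≤ |t₂ - t₁|} ∩ Δ₂ = ∅ :=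
      setOf_infDist_le_inter_eq_empty hne (abs_sub_comm t₁ t₂ ▸ hd) hsep
    have hφ0 : E t₂ Δ₂ φ = 0 :=
      hloc t₂ _ Δ₂ (hb₁.setOf_infDist_le hne _) hb₂ hdisj φ (hsc t₁ t₂ Δ₁ hb₁ φ hφ)
    have hsymm : (E t₂ Δ₂ : H →ₗ[ℂ] H).IsSymmetric :=
      ((E t₂ Δ₂).nonneg_iff_isPositive.1 (heff t₂ Δ₂ hb₂).1).isSymmetric
    exact hsymm.inner_eq_zero_of_apply_eq_zero_of_apply_eq_self hφ0 hψ

/-- **Strong causality for unsharp localization: orthogonality of sharply localized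
states at spacelike separation.**  If an effect-valued localization `(t, Δ) ↦ E(t,Δ)`
satisfies weak localizability and strong causality (any state sharply localized in `Δ`
at time `t` is sharply localized in the inflated set `Δ_{|t'−t|}` at time `t'`), then
states sharply localized in spacelike separated sets are orthogonal, i.e.
`P⁽¹⁾_{Δ₁} P⁽¹⁾_{Δ₂} = 0` for the spectral projections at eigenvalue `1`. -/
theorem strong_causality_orthogonality_unsharp
    {H : Type*} [NormedAddCommGroup H] [InnerProductSpace ℂ H] [CompleteSpace H]
    (E : ℝ → Set (EuclideanSpace ℝ (Fin 3)) → (H →L[ℂ] H))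
    -- each E(t,Δ) is an effect
    (heff : ∀ (t : ℝ) (Δ : Set (EuclideanSpace ℝ (Fin 3))), IsBounded Δ →
      0 ≤ E t Δ ∧ E t Δ ≤ 1)
    -- weak localizability
    (hloc : ∀ (t : ℝ) (Δ₁ Δ₂ : Set (EuclideanSpace ℝ (Fin 3))),
      IsBounded Δ₁ → IsBounded Δ₂ → Δ₁ ∩ Δ₂ = ∅ →
      ∀ φ : H, E t Δ₁ φ = φ → E t Δ₂ φ = 0)
    -- strong causality
    (hsc : ∀ (t t' : ℝ) (Δ : Set (EuclideanSpace ℝ (Fin 3))), IsBounded Δ →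
      ∀ φ : H, E t Δ φ = φ → E t' {x | Metric.infDist x Δ ≤ |t' - t|} φ = φ) :
    ∀ (t₁ t₂ : ℝ) (Δ₁ Δ₂ : Set (EuclideanSpace ℝ (Fin 3))),
      IsBounded Δ₁ → IsBounded Δ₂ →
      (∃ d : ℝ, |t₁ - t₂| < d ∧ ∀ x ∈ Δ₁, ∀ y ∈ Δ₂, d ≤ dist x y) →
      ∀ φ ψ : H, E t₁ Δ₁ φ = φ → E t₂ Δ₂ ψ = ψ → ⟪φ, ψ⟫_ℂ = 0 :=
  strong_causality_orthogonality_unsharp_general E heff hloc hsc
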